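/- arXiv:1910.13809 — 2 statements merged into one kernel-verified Lean document; each statement's English description precedes it below -/
import Mathlib

section
/- For every permutation σ of [n-1], crs(σ^{-(n,1)}) = crs(σ), where σ^{-(n,1)} is the permutation of [n] obtained from σ⁻¹ by adding 1 to all values and appending the value 1 at position n. Equivalently, the map σ ↦ σ^{-(n,1)} from S_{n-1} to the set of permutations of [n] with last value equal to 1 preserves the number of crossings. -/
/-! Put `a = σ i` and `b = σ j`. Then `π a = i + 1` and `π b = j + 1`, so an upper crossing
`i < j < σ i < σ j` of `σ` is exactly a lower crossing `π a < π b ≤ a < b` of `π`, and a lower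
crossing of `σ` is exactly an upper crossing of `π`. The last position of `π` carries the value
`0`, hence lies in no crossing, and every other position of `π` is of the form `σ i`. -/

open scoped Classical

/-- The number of crossings of a permutation: pairs (i,j) with
i < j < σ(i) < σ(j) or σ(i) < σ(j) ≤ i < j. -/
noncomputable def crs {n : ℕ} (σ : Equiv.Perm (Fin n)) : ℕ :=
  (Finset.univ.filter (fun p : Fin n × Fin n =>
    (p.1 < p.2 ∧ p.2 < σ p.1 ∧ σ p.1 < σ p.2) ∨
    (σ p.1 < σ p.2 ∧ σ p.2 ≤ p.1 ∧ p.1 < p.2))).card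

/-- Number of upper transients: i with σ⁻¹(i) < i < σ(i). -/
noncomputable def utCount {n : ℕ} (σ : Equiv.Perm (Fin n)) : ℕ :=
  (Finset.univ.filter (fun i : Fin n => σ.symm i < i ∧ i < σ i)).card

/-- Number of lower transients: i with σ(i) < i < σ⁻¹(i). -/
noncomputable def ltCount {n : ℕ} (σ : Equiv.Perm (Fin n)) : ℕ :=
  (Finset.univ.filter (fun i : Fin n => σ i < i ∧ i < σ.symm i)).card

/-- σ contains the pattern τ. -/
def Contains {n k : ℕ} (σ : Equiv.Perm (Fin n)) (τ : Fin k → ℕ) : Prop :=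
  ∃ f : Fin k → Fin n, StrictMono f ∧ ∀ x y, σ (f x) < σ (f y) ↔ τ x < τ y

/-- σ avoids the pattern τ. -/
def Avoids {n k : ℕ} (σ : Equiv.Perm (Fin n)) (τ : Fin k → ℕ) : Prop :=
  ¬ Contains σ τ

def p123 : Fin 3 → ℕ := ![1, 2, 3]
def p132 : Fin 3 → ℕ := ![1, 3, 2]
def p213 : Fin 3 → ℕ := ![2, 1, 3]
def p231 : Fin 3 → ℕ := ![2, 3, 1]
def p312 : Fin 3 → ℕ := ![3, 1, 2]
def p321 : Fin 3 → ℕ := ![3, 2, 1]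

/-- Generating polynomial of crs over permutations of [n] satisfying P. -/
noncomputable def Fpoly (n : ℕ) (P : Equiv.Perm (Fin n) → Prop) : Polynomial ℤ :=
  ∑ σ : Equiv.Perm (Fin n), if P σ then Polynomial.X ^ crs σ else 0

def IsCrossing {n : ℕ} (σ : Equiv.Perm (Fin n)) (i j : Fin n) : Prop :=
  (i < j ∧ j < σ i ∧ σ i < σ j) ∨ (σ i < σ j ∧ σ j ≤ i ∧ i < j)

lemma crs_eq_card_isCrossing {n : ℕ} (σ : Equiv.Perm (Fin n)) :
    crs σ = (Finset.univ.filter fun p : Fin n × Fin n => IsCrossing σ p.1 p.2).card := by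
  unfold crs IsCrossing
  congr

lemma not_isCrossing_last_left {m : ℕ} (π : Equiv.Perm (Fin (m + 1))) (j : Fin (m + 1)) :
    ¬ IsCrossing π (Fin.last m) j := by
  have := Fin.le_last j
  unfold IsCrossing
  omega

lemma not_isCrossing_last_right {m : ℕ} {π : Equiv.Perm (Fin (m + 1))}
    (hlast : π (Fin.last m) = 0) (i : Fin (m + 1)) : ¬ IsCrossing π i (Fin.last m) := by
  simp [IsCrossing, hlast]

section InsertLast

variable {m : ℕ} {σ : Equiv.Perm (Fin m)} {π : Equiv.Perm (Fin (m + 1))}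

lemma isCrossing_castSucc_apply_iff (hπ : ∀ x, π (σ x).castSucc = x.succ) (i j : Fin m) :
    IsCrossing π (σ i).castSucc (σ j).castSucc ↔ IsCrossing σ i j := by
  simp only [IsCrossing, hπ, Fin.lt_def, Fin.le_def, Fin.val_castSucc, Fin.val_succ]
  omega

lemma crs_eq_of_apply_castSucc (hπ : ∀ x, π (σ x).castSucc = x.succ)
    (hlast : π (Fin.last m) = 0) : crs π = crs σ := by
  rw [crs_eq_card_isCrossing, crs_eq_card_isCrossing]
  symm
  apply Finset.card_bij (fun p _ => ((σ p.1).castSucc, (σ p.2).castSucc))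
  · intro p hp
    simpa [isCrossing_castSucc_apply_iff hπ] using hp
  · intro p _ q _ hpq
    simp only [Prod.mk.injEq, Fin.castSucc_inj, EmbeddingLike.apply_eq_iff_eq] at hpq
    exact Prod.ext hpq.1 hpq.2
  · rintro ⟨a, b⟩ hab
    simp only [Finset.mem_filter, Finset.mem_univ, true_and] at hab
    obtain ⟨a, rfl⟩ | rfl := a.eq_castSucc_or_eq_last
    · obtain ⟨b, rfl⟩ | rfl := b.eq_castSucc_or_eq_last
      · refine ⟨(σ.symm a, σ.symm b), ?_, by simp⟩
        simpa [← isCrossing_castSucc_apply_iff hπ] using hab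
      · exact absurd hab (not_isCrossing_last_right hlast _)
    · exact absurd hab (not_isCrossing_last_left π b)

end InsertLast

theorem crs_inv_insert_last (n : ℕ) (hn : 1 ≤ n)
    (σ : Equiv.Perm (Fin (n - 1))) (π : Equiv.Perm (Fin n))
    (h1 : ∀ (i : ℕ) (hi : i < n - 1),
      (π ⟨i, by omega⟩ : ℕ) = (σ.symm ⟨i, hi⟩ : ℕ) + 1)
    (h2 : (π ⟨n - 1, by omega⟩ : ℕ) = 0) :
    crs π = crs σ := by
  obtain ⟨m, rfl⟩ := Nat.exists_eq_add_of_le' hn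
  -- `Fin (m + 1 - 1)` is definitionally `Fin m`.
  refine crs_eq_of_apply_castSucc (σ := σ) (fun x => Fin.ext ?_) (Fin.ext h2)
  exact (h1 (σ x) (σ x).isLt).trans (by simp)
end

section
/- For all n ≥ 2 and k ≥ 0, the number of permutations σ of [n] avoiding 123 and 132 with σ(n−1) = 1 and crs(σ) = k equals the binomial coefficient C(n−2, k). -/
open scoped Classical

/-!
Every entry of a permutation avoiding 123 and 132 has at most one larger entry to its right, so
position `i` holds at least `n - 2 - i`, and reading from the left each entry is either `n - 2 - i`
or the largest value not used yet. Recording the largest-unused choice as `true`, the permutations with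
`σ (n - 2) = 0` correspond to arbitrary words of length `n - 2`. The larger entry to the right of
a position `i` holding `n - 2 - i` sits at the next `true`, and this pair is a crossing iff the
word has a `true` between `i` and its mirror image `n - 2 - i`. Adding a letter at both ends of
the word multiplies the generating polynomial of this statistic by `(1 + X) ^ 2`, so it is
`(1 + X) ^ (n - 2)`.
-/

open Finset Polynomial

lemma card_filter_apply_mem {α : Type*} [Fintype α] [DecidableEq α] (σ : Equiv.Perm α)
    (s : Finset α) : #{t | σ t ∈ s} = #s := by
  rw [← card_map σ.toEmbedding]
  congr 1
  ext v
  simp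

lemma apply_le_of_eqOn_Iio {n : ℕ} {σ τ : Equiv.Perm (Fin n)} {i : Fin n}
    (hmax : ∀ j, i ≤ j → σ j ≤ σ i) (hagree : ∀ t < i, σ t = τ t) : τ i ≤ σ i := by
  obtain ⟨a, ha⟩ := σ.surjective (τ i)
  rw [← ha]
  refine hmax a (not_lt.1 fun hai => ?_)
  rw [hagree a hai] at ha
  exact hai.ne (τ.injective ha)

def AtMostOneLargerRight {n : ℕ} (σ : Equiv.Perm (Fin n)) : Prop :=
  ∀ ⦃i j k : Fin n⦄, i < j → i < k → σ i < σ j → σ i < σ k → j = k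

theorem avoids_p123_and_p132_iff {n : ℕ} (σ : Equiv.Perm (Fin n)) :
    Avoids σ p123 ∧ Avoids σ p132 ↔ AtMostOneLargerRight σ := by
  constructor
  · rintro ⟨h123, h132⟩ i j k hij hik hj hk
    by_contra hjk
    wlog hjk' : j < k generalizing j k
    · exact this hik hij hk hj (Ne.symm hjk) (lt_of_le_of_ne (not_lt.1 hjk') (Ne.symm hjk))
    have hmono : StrictMono ![i, j, k] := by
      refine Fin.strictMono_iff_lt_succ.2 fun a => ?_
      fin_cases a <;> simpa
    rcases lt_or_gt_of_ne (σ.injective.ne hjk) with hσ | hσ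
    · refine h123 ⟨_, hmono, fun x y => ?_⟩
      fin_cases x <;> fin_cases y <;> simp [p123, hj, hk, hσ, hj.not_gt, hk.not_gt, hσ.not_gt]
    · refine h132 ⟨_, hmono, fun x y => ?_⟩
      fin_cases x <;> fin_cases y <;> simp [p132, hj, hk, hσ, hj.not_gt, hk.not_gt, hσ.not_gt]
  · intro h
    have key : ∀ τ : Fin 3 → ℕ, τ 0 < τ 1 → τ 0 < τ 2 → ¬ Contains σ τ := by
      rintro τ h1 h2 ⟨f, hf, hfσ⟩
      have := h (hf (show (0 : Fin 3) < 1 by decide)) (hf (show (0 : Fin 3) < 2 by decide))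
        ((hfσ 0 1).2 h1) ((hfσ 0 2).2 h2)
      exact absurd (hf.injective this) (by decide)
    exact ⟨key p123 (by decide) (by decide), key p132 (by decide) (by decide)⟩

namespace AtMostOneLargerRight

variable {n : ℕ} {σ : Equiv.Perm (Fin n)}

lemma le_apply_add_add (h : AtMostOneLargerRight σ) (i : Fin n) : n ≤ (σ i : ℕ) + i + 2 := by
  have hlarger : #{t | σ t ∈ Ioi (σ i)} = n - 1 - σ i := by
    rw [card_filter_apply_mem, Fin.card_Ioi]
  have hsub : ({t | σ t ∈ Ioi (σ i)} : Finset (Fin n)) ⊆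
      Iio i ∪ ({t | i < t ∧ σ i < σ t} : Finset (Fin n)) := by
    intro t ht
    simp only [mem_filter, mem_univ, mem_Ioi, true_and, mem_union, mem_Iio] at ht ⊢
    rcases lt_trichotomy t i with hti | rfl | hit
    · exact Or.inl hti
    · exact absurd ht (lt_irrefl _)
    · exact Or.inr ⟨hit, ht⟩
  have hright : #{t | i < t ∧ σ i < σ t} ≤ 1 :=
    card_le_one.2 fun j hj k hk => by
      simp only [mem_filter, mem_univ, true_and] at hj hk
      exact h hj.1 hk.1 hj.2 hk.2
  have := (card_le_card hsub).trans (card_union_le _ _)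
  rw [hlarger, Fin.card_Iio] at this
  omega

lemma apply_lt_of_lt (h : AtMostOneLargerRight σ) {i j : Fin n} (hi : n < (σ i : ℕ) + i + 2)
    (hij : i < j) : σ j < σ i := by
  by_contra hji
  have hσ : σ i < σ j := lt_of_le_of_ne (not_lt.1 hji) (σ.injective.ne hij.ne)
  set w : Fin n := ⟨n - 1 - i, by omega⟩
  have hw : (w : ℕ) = n - 1 - i := rfl
  have hsub : insert j (Iic i) ⊆ ({t | σ t ∈ Ici w} : Finset (Fin n)) := by
    intro t ht
    simp only [mem_insert, mem_Iic, mem_filter, mem_univ, mem_Ici, true_and] at ht ⊢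
    rw [Fin.le_def, hw]
    rcases ht with rfl | hti
    · have := Fin.lt_def.1 hσ
      omega
    · rcases hti.eq_or_lt with rfl | hti
      · omega
      · have := h.le_apply_add_add t
        have := Fin.lt_def.1 hti
        omega
  have := card_le_card hsub
  rw [card_insert_of_notMem (by simpa using hij), Fin.card_Iic, card_filter_apply_mem,
    Fin.card_Ici, hw] at this
  omega

lemma apply_le_of_le (h : AtMostOneLargerRight σ) {i j : Fin n} (hi : n < (σ i : ℕ) + i + 2)
    (hij : i ≤ j) : σ j ≤ σ i := by
  rcases eq_or_lt_of_le hij with rfl | hij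
  · exact le_rfl
  · exact (h.apply_lt_of_lt hi hij).le

/-- At a position `i` not holding `n - 2 - i`, both permutations take the largest value not used
further left. -/
theorem ext {τ : Equiv.Perm (Fin n)} (hσ : AtMostOneLargerRight σ) (hτ : AtMostOneLargerRight τ)
    (hlow : ∀ i, (σ i : ℕ) + i + 2 = n ↔ (τ i : ℕ) + i + 2 = n) : σ = τ := by
  refine Equiv.ext fun i => ?_
  induction i using WellFoundedLT.induction with
  | _ i ih =>
  by_cases hi : (σ i : ℕ) + i + 2 = n
  · exact Fin.ext (by have := (hlow i).1 hi; omega)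
  · have hσi : n < (σ i : ℕ) + i + 2 := lt_of_le_of_ne (hσ.le_apply_add_add i) (Ne.symm hi)
    have hτi : n < (τ i : ℕ) + i + 2 :=
      lt_of_le_of_ne (hτ.le_apply_add_add i) (Ne.symm (mt (hlow i).2 hi))
    exact le_antisymm
      (apply_le_of_eqOn_Iio (fun j => hτ.apply_le_of_le hτi) fun t ht => (ih t ht).symm)
      (apply_le_of_eqOn_Iio (fun j => hσ.apply_le_of_le hσi) ih)

/-- A crossing `(i, j)` has `i < j` and `σ i < σ j`, so it is determined by `i`. -/
lemma crs_eq (h : AtMostOneLargerRight σ) :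
    crs σ = #{i | ∃ j, i < j ∧ σ i < σ j ∧ (j < σ i ∨ σ j ≤ i)} := by
  refine card_bij (fun p _ => p.1) ?_ ?_ ?_
  · rintro ⟨i, j⟩ hp
    simp only [mem_filter, mem_univ, true_and] at hp ⊢
    rcases hp with ⟨hij, hj, hσ⟩ | ⟨hσ, hj, hij⟩
    · exact ⟨j, hij, hσ, Or.inl hj⟩
    · exact ⟨j, hij, hσ, Or.inr hj⟩
  · rintro ⟨i, j⟩ hp ⟨i', j'⟩ hp' (rfl : i = i')
    simp only [mem_filter, mem_univ, true_and] at hp hp'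
    obtain ⟨hij, hσ⟩ : i < j ∧ σ i < σ j := by tauto
    obtain ⟨hij', hσ'⟩ : i < j' ∧ σ i < σ j' := by tauto
    rw [h hij hij' hσ hσ']
  · intro i hi
    simp only [mem_filter, mem_univ, true_and] at hi
    obtain ⟨j, hij, hσ, hj | hj⟩ := hi
    · exact ⟨(i, j), by simp [hij, hj, hσ], rfl⟩
    · exact ⟨(i, j), by simp [hij, hj, hσ], rfl⟩

end AtMostOneLargerRight

/-- The first position of the block of `false`s of `w` that ends just before position `i`. -/
noncomputable def runStart (w : ℕ → Bool) (i : ℕ) : ℕ :=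
  Nat.findGreatest (fun s => 0 < s ∧ w (s - 1) = true) i

section runStart

variable (w : ℕ → Bool) {i t : ℕ}

lemma runStart_le (i : ℕ) : runStart w i ≤ i := Nat.findGreatest_le i

lemma runStart_mono {i j : ℕ} (hij : i ≤ j) : runStart w i ≤ runStart w j :=
  Nat.findGreatest_mono_right _ hij

lemma lt_runStart (hti : t < i) (ht : w t = true) : t < runStart w i :=
  Nat.le_findGreatest hti ⟨t.succ_pos, ht⟩

lemma runStart_pred (h : 0 < runStart w i) : w (runStart w i - 1) = true :=
  (Nat.findGreatest_of_ne_zero rfl h.ne').2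

lemma runStart_le_of {s : ℕ} (h : ∀ t, s ≤ t → t < i → w t = false) :
    runStart w i ≤ s := by
  by_contra! hlt
  have := h _ (Nat.le_sub_one_of_lt hlt) (by have := runStart_le w i; omega)
  rw [runStart_pred w (by omega)] at this
  exact Bool.noConfusion this

end runStart

/-- Reading `w` from the left, a `false` at position `i` places the value `n - 2 - i` and a `true`
places the largest value not used so far; the last position is always treated as a `true`. -/
noncomputable def wordPermFun (n : ℕ) (w : ℕ → Bool) (i : ℕ) : ℕ :=
  if w i = true ∨ i + 1 = n then n - 1 - runStart w i else n - 2 - i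

lemma wordPermFun_lt {n : ℕ} (w : ℕ → Bool) {i : ℕ} (hi : i < n) :
    wordPermFun n w i < n := by
  unfold wordPermFun
  split_ifs <;> omega

lemma wordPermFun_injOn {n : ℕ} (w : ℕ → Bool) {i j : ℕ} (hi : i < n) (hj : j < n)
    (h : wordPermFun n w i = wordPermFun n w j) : i = j := by
  wlog hij : i < j generalizing i j
  · rcases (not_lt.1 hij).eq_or_lt with rfl | hji
    · rfl
    · exact (this hj hi h.symm hji).symm
  have hri := runStart_le w i
  have hrj := runStart_le w j
  unfold wordPermFun at h
  split_ifs at h with hhi hhj hhj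
  · have := lt_runStart w hij (hhi.resolve_right (by omega))
    omega
  · omega
  · simp only [not_or] at hhi
    have hrj' : runStart w j = i + 1 := by omega
    have := runStart_pred w (i := j) (by omega)
    rw [hrj', Nat.add_sub_cancel] at this
    exact (hhi.1 this).elim
  · omega

noncomputable def wordPerm (n : ℕ) (w : ℕ → Bool) : Equiv.Perm (Fin n) :=
  Equiv.ofBijective (fun i => ⟨wordPermFun n w i, wordPermFun_lt w i.isLt⟩)
    (Finite.injective_iff_bijective.mp fun i j h =>
      Fin.ext (wordPermFun_injOn w i.isLt j.isLt (Fin.val_eq_of_eq h)))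

section wordPerm

variable {n : ℕ} (w : ℕ → Bool)

lemma wordPerm_apply_of_high {i : Fin n} (hi : w i = true ∨ (i : ℕ) + 1 = n) :
    (wordPerm n w i : ℕ) = n - 1 - runStart w i :=
  if_pos hi

lemma wordPerm_apply_of_low {i : Fin n} (hwi : w i = false) (hi : (i : ℕ) + 1 ≠ n) :
    (wordPerm n w i : ℕ) = n - 2 - i :=
  if_neg (by simp [hwi, hi])

lemma wordPerm_apply_add_add_eq_iff (i : Fin n) :
    (wordPerm n w i : ℕ) + i + 2 = n ↔ w i = false ∧ (i : ℕ) + 1 ≠ n := by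
  have := i.isLt
  by_cases hi : w i = true ∨ (i : ℕ) + 1 = n
  · have := runStart_le w i
    rw [wordPerm_apply_of_high w hi]
    exact iff_of_false (by omega) (by rintro ⟨h₁, h₂⟩; simp_all)
  · simp only [not_or, Bool.not_eq_true] at hi
    rw [wordPerm_apply_of_low w hi.1 hi.2]
    exact iff_of_true (by omega) hi

lemma wordPerm_lt_wordPerm_iff {i j : Fin n} (hij : i < j) :
    wordPerm n w i < wordPerm n w j ↔
      w i = false ∧ (w j = true ∨ (j : ℕ) + 1 = n) ∧ runStart w j ≤ i := by
  have hri := runStart_le w i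
  have hrj := runStart_le w j
  have hij' := Fin.lt_def.1 hij
  have hj := j.isLt
  rw [Fin.lt_def]
  by_cases hhi : w i = true
  · rw [wordPerm_apply_of_high w (Or.inl hhi)]
    refine iff_of_false ?_ (by simp [hhi])
    by_cases hhj : w j = true ∨ (j : ℕ) + 1 = n
    · have := lt_runStart w hij' hhi
      rw [wordPerm_apply_of_high w hhj]
      omega
    · simp only [not_or, Bool.not_eq_true] at hhj
      rw [wordPerm_apply_of_low w hhj.1 hhj.2]
      omega
  · rw [Bool.not_eq_true] at hhi
    rw [wordPerm_apply_of_low w hhi (by omega)]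
    by_cases hhj : w j = true ∨ (j : ℕ) + 1 = n
    · rw [wordPerm_apply_of_high w hhj]
      simp only [hhi, hhj, true_and]
      omega
    · simp only [not_or, Bool.not_eq_true] at hhj
      rw [wordPerm_apply_of_low w hhj.1 hhj.2]
      exact iff_of_false (by omega) (by simp [hhj])

theorem atMostOneLargerRight_wordPerm : AtMostOneLargerRight (wordPerm n w) := by
  intro i j k hij hik hj hk
  rw [wordPerm_lt_wordPerm_iff w hij] at hj
  rw [wordPerm_lt_wordPerm_iff w hik] at hk
  have key : ∀ {j k : Fin n}, i < j → j < k → (w j = true ∨ (j : ℕ) + 1 = n) →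
      runStart w k ≤ i → False := by
    intro j k hij hjk hj hk
    have hjk' := Fin.lt_def.1 hjk
    have := lt_runStart w hjk' (hj.resolve_right (by have := k.isLt; omega))
    have := Fin.lt_def.1 hij
    omega
  rcases lt_trichotomy j k with hjk | rfl | hkj
  · exact (key hij hjk hj.2.1 hk.2.2).elim
  · rfl
  · exact (key hik hkj hk.2.1 hj.2.2).elim

lemma exists_wordPerm_lt {i : Fin n} (hi : (i : ℕ) + 1 < n) (hwi : w i = false) :
    ∃ j : Fin n, i < j ∧ wordPerm n w i < wordPerm n w j ∧
      ∀ t, (i : ℕ) < t → w t = true → (j : ℕ) ≤ t := by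
  have hex : ∃ j, (i : ℕ) < j ∧ j < n ∧ (w j = true ∨ j + 1 = n) :=
    ⟨n - 1, by omega, by omega, Or.inr (by omega)⟩
  obtain ⟨hij, hj, hwj⟩ := Nat.find_spec hex
  have hrj : runStart w (Nat.find hex) ≤ i := by
    refine runStart_le_of w fun s his hsj => ?_
    rcases his.eq_or_lt with rfl | his
    · exact hwi
    · have := Nat.find_min hex hsj
      simp only [not_and, not_or, Bool.not_eq_true] at this
      exact (this his (by omega)).1
  refine ⟨⟨Nat.find hex, hj⟩, Fin.lt_def.2 hij,
    (wordPerm_lt_wordPerm_iff w (Fin.lt_def.2 hij)).2 ⟨hwi, hwj, hrj⟩, fun t hit hwt => ?_⟩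
  by_contra! hti
  exact Nat.find_min hex hti ⟨hit, by omega, Or.inl hwt⟩

end wordPerm

def HasTrueIn (w : ℕ → Bool) (a b : ℕ) : Prop := ∃ t, a ≤ t ∧ t < b ∧ w t = true

def IsCrossingPos (L : ℕ) (w : ℕ → Bool) (i : ℕ) : Prop :=
  w i = false ∧ HasTrueIn w (min i (L - i)) (max i (L - i))

noncomputable def wordCrs (L : ℕ) (w : ℕ → Bool) : ℕ :=
  #{i ∈ range (L + 1) | IsCrossingPos L w i}

lemma wordPerm_crossing_iff {n : ℕ} (w : ℕ → Bool) (i : Fin n) :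
    (∃ j, i < j ∧ wordPerm n w i < wordPerm n w j ∧
        (j < wordPerm n w i ∨ wordPerm n w j ≤ i)) ↔
      (i : ℕ) + 1 < n ∧ IsCrossingPos (n - 2) w i := by
  constructor
  · rintro ⟨j, hij, hσ, hcross⟩
    have hij' := Fin.lt_def.1 hij
    obtain ⟨hwi, hwj, hrj⟩ := (wordPerm_lt_wordPerm_iff w hij).1 hσ
    rw [Fin.lt_def, Fin.le_def, wordPerm_apply_of_low w hwi (by omega),
      wordPerm_apply_of_high w hwj] at hcross
    refine ⟨by omega, hwi, ?_⟩
    rcases hcross with hcross | hcross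
    · exact ⟨j, by omega, by omega, hwj.resolve_right (by omega)⟩
    · exact ⟨runStart w j - 1, by omega, by omega, runStart_pred w (by omega)⟩
  · rintro ⟨hi, hwi, t, htmin, htmax, hwt⟩
    obtain ⟨j, hij, hσ, hfirst⟩ := exists_wordPerm_lt w hi hwi
    obtain ⟨-, hwj, hrj⟩ := (wordPerm_lt_wordPerm_iff w hij).1 hσ
    refine ⟨j, hij, hσ, ?_⟩
    rw [Fin.lt_def, Fin.le_def, wordPerm_apply_of_low w hwi (by omega),
      wordPerm_apply_of_high w hwj]
    rcases lt_or_ge t i with hti | hit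
    · have := lt_runStart w hti hwt
      have := runStart_mono w (Fin.le_def.1 hij.le)
      exact Or.inr (by omega)
    · have := hfirst t (lt_of_le_of_ne hit (by rintro rfl; simp_all)) hwt
      exact Or.inl (by omega)

theorem crs_wordPerm (L : ℕ) (w : ℕ → Bool) : crs (wordPerm (L + 2) w) = wordCrs L w := by
  rw [(atMostOneLargerRight_wordPerm w).crs_eq, wordCrs]
  simp_rw [wordPerm_crossing_iff, Nat.add_sub_cancel]
  refine card_bij (fun i _ => i.val) ?_ (fun i _ j _ h => Fin.ext h) ?_
  · intro i hi
    simp only [mem_filter, mem_univ, true_and, mem_range] at hi ⊢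
    exact ⟨by omega, hi.2⟩
  · intro k hk
    simp only [mem_filter, mem_range] at hk
    refine ⟨⟨k, by omega⟩, ?_, rfl⟩
    simp only [mem_filter, mem_univ, true_and]
    exact ⟨by omega, hk.2⟩

def extendWord {L : ℕ} (c : Fin L → Bool) (t : ℕ) : Bool :=
  if h : t < L then c ⟨t, h⟩ else false

section extendWord

variable {L : ℕ}

lemma extendWord_of_le (c : Fin L → Bool) {t : ℕ} (ht : L ≤ t) : extendWord c t = false :=
  dif_neg (by omega)

@[simp] lemma extendWord_cons_zero (b : Bool) (c : Fin L → Bool) :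
    extendWord (Fin.cons b c : Fin (L + 1) → Bool) 0 = b := by
  simp [extendWord]

@[simp] lemma extendWord_cons_succ (b : Bool) (c : Fin L → Bool) (t : ℕ) :
    extendWord (Fin.cons b c : Fin (L + 1) → Bool) (t + 1) = extendWord c t := by
  by_cases ht : t < L
  · simp [extendWord, ht, ← Fin.succ_mk]
  · simp [extendWord, ht]

lemma extendWord_snoc_of_lt (c : Fin L → Bool) (b : Bool) {t : ℕ} (ht : t < L) :
    extendWord (Fin.snoc c b : Fin (L + 1) → Bool) t = extendWord c t := by
  simp [extendWord, ht, Nat.lt_succ_of_lt ht, ← Fin.castSucc_mk]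

@[simp] lemma extendWord_snoc_self (c : Fin L → Bool) (b : Bool) :
    extendWord (Fin.snoc c b : Fin (L + 1) → Bool) L = b := by
  simp only [extendWord, Nat.lt_add_one, dite_true]
  exact Fin.snoc_last (α := fun _ => Bool) b c

lemma hasTrueIn_cons_succ (b : Bool) (c : Fin L → Bool) (x y : ℕ) :
    HasTrueIn (extendWord (Fin.cons b c : Fin (L + 1) → Bool)) (x + 1) (y + 1) ↔
      HasTrueIn (extendWord c) x y := by
  constructor
  · rintro ⟨t, hxt, hty, ht⟩
    obtain ⟨t, rfl⟩ : ∃ s, t = s + 1 := ⟨t - 1, by omega⟩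
    exact ⟨t, by omega, by omega, by simpa using ht⟩
  · rintro ⟨t, hxt, hty, ht⟩
    exact ⟨t + 1, by omega, by omega, by simpa using ht⟩

lemma hasTrueIn_snoc (c : Fin L → Bool) (b : Bool) {x y : ℕ} (hy : y ≤ L) :
    HasTrueIn (extendWord (Fin.snoc c b : Fin (L + 1) → Bool)) x y ↔
      HasTrueIn (extendWord c) x y := by
  constructor
  · rintro ⟨t, hxt, hty, ht⟩
    exact ⟨t, hxt, hty, by rwa [extendWord_snoc_of_lt c b (by omega)] at ht⟩
  · rintro ⟨t, hxt, hty, ht⟩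
    exact ⟨t, hxt, hty, by rwa [extendWord_snoc_of_lt c b (by omega)]⟩

lemma isCrossingPos_self (c : Fin L → Bool) :
    IsCrossingPos L (extendWord c) L ↔ HasTrueIn (extendWord c) 0 L := by
  simp [IsCrossingPos, extendWord_of_le]

end extendWord

section consSnoc

variable {L : ℕ} (b₀ b₁ : Bool) (d : Fin L → Bool)

local notation "w'" => extendWord (Fin.cons b₀ (Fin.snoc d b₁) : Fin (L + 2) → Bool)

lemma hasTrueIn_cons_snoc_inner {x y : ℕ} (hy : y ≤ L) :
    HasTrueIn w' (x + 1) (y + 1) ↔ HasTrueIn (extendWord d) x y := by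
  rw [hasTrueIn_cons_succ, hasTrueIn_snoc d b₁ hy]

lemma hasTrueIn_cons_snoc_outer :
    HasTrueIn w' 0 (L + 2) ↔ b₀ = true ∨ b₁ = true ∨ HasTrueIn (extendWord d) 0 L := by
  rw [← hasTrueIn_cons_snoc_inner b₀ b₁ d le_rfl]
  constructor
  · rintro ⟨t, -, htL, ht⟩
    rcases Nat.eq_zero_or_pos t with rfl | htpos
    · simp_all
    · rcases (show t < L + 1 ∨ t = L + 1 by omega) with htL' | rfl
      · exact Or.inr (Or.inr ⟨t, htpos, htL', ht⟩)
      · simp_all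
  · rintro (h | h | ⟨t, -, htL, ht⟩)
    · exact ⟨0, le_rfl, by omega, by simpa using h⟩
    · exact ⟨L + 1, by omega, by omega, by simpa using h⟩
    · exact ⟨t, by omega, by omega, ht⟩

lemma isCrossingPos_cons_snoc_succ {i : ℕ} (hi : i < L) :
    IsCrossingPos (L + 2) w' (i + 1) ↔ IsCrossingPos L (extendWord d) i := by
  rw [IsCrossingPos, IsCrossingPos, show min (i + 1) (L + 2 - (i + 1)) = min i (L - i) + 1 by omega,
    show max (i + 1) (L + 2 - (i + 1)) = max i (L - i) + 1 by omega, extendWord_cons_succ,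
    extendWord_snoc_of_lt d b₁ hi, hasTrueIn_cons_snoc_inner b₀ b₁ d (by omega)]

/-- The correction term on the left is the contribution of the last position `L` of `d`, which
stops being a crossing position of `b₀ d b₁` when `b₁ = true`. -/
lemma wordCrs_cons_snoc :
    wordCrs (L + 2) w' + (if HasTrueIn (extendWord d) 0 L then 1 else 0) =
      wordCrs L (extendWord d) +
        ((if b₀ = false ∧ (b₁ = true ∨ HasTrueIn (extendWord d) 0 L) then 1 else 0) +
          (if b₀ = true ∨ b₁ = true ∨ HasTrueIn (extendWord d) 0 L then 1 else 0) +
          (if b₁ = false ∧ HasTrueIn (extendWord d) 0 L then 1 else 0)) := by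
  have hfirst : IsCrossingPos (L + 2) w' 0 ↔
      b₀ = false ∧ (b₁ = true ∨ HasTrueIn (extendWord d) 0 L) := by
    rw [IsCrossingPos, Nat.sub_zero, Nat.zero_min, Nat.zero_max, hasTrueIn_cons_snoc_outer,
      extendWord_cons_zero]
    cases b₀ <;> simp
  have hpenult : IsCrossingPos (L + 2) w' (L + 1) ↔
      b₁ = false ∧ HasTrueIn (extendWord d) 0 L := by
    rw [IsCrossingPos, show min (L + 1) (L + 2 - (L + 1)) = 0 + 1 by omega,
      show max (L + 1) (L + 2 - (L + 1)) = L + 1 by omega,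
      hasTrueIn_cons_snoc_inner b₀ b₁ d le_rfl, extendWord_cons_succ, extendWord_snoc_self]
  rw [wordCrs, wordCrs, card_filter, card_filter, sum_range_succ, sum_range_succ',
    sum_range_succ, sum_range_succ,
    sum_congr rfl fun i hi => if_congr (isCrossingPos_cons_snoc_succ b₀ b₁ d (mem_range.1 hi))
      rfl rfl,
    if_congr hfirst rfl rfl, if_congr hpenult rfl rfl,
    if_congr ((isCrossingPos_self _).trans (hasTrueIn_cons_snoc_outer b₀ b₁ d)) rfl rfl,
    if_congr (isCrossingPos_self d) rfl rfl]
  ring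

end consSnoc

lemma sum_fin_cons_snoc {M : Type*} [AddCommMonoid M] {L : ℕ} (f : (Fin (L + 2) → Bool) → M) :
    ∑ c, f c = ∑ d : Fin L → Bool, ∑ b₀ : Bool, ∑ b₁ : Bool,
      f (Fin.cons b₀ (Fin.snoc d b₁ : Fin (L + 1) → Bool)) := by
  rw [← (Fin.consEquiv fun _ => Bool).sum_comp, Fintype.sum_prod_type]
  conv_lhs =>
    enter [2, b₀]
    rw [← (Fin.snocEquiv fun _ => Bool).sum_comp, Fintype.sum_prod_type, sum_comm]
  exact sum_comm

lemma wordCrs_zero (w : ℕ → Bool) : wordCrs 0 w = 0 := by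
  simp [wordCrs, IsCrossingPos, HasTrueIn]

lemma wordCrs_one (c : Fin 1 → Bool) : wordCrs 1 (extendWord c) = if c 0 then 1 else 0 := by
  have hzero : ¬ IsCrossingPos 1 (extendWord c) 0 := by
    rintro ⟨h, t, -, ht, htt⟩
    obtain rfl : t = 0 := by omega
    simp_all
  have hone : HasTrueIn (extendWord c) 0 1 ↔ c 0 = true := by
    refine ⟨fun ⟨t, _, ht, htt⟩ => ?_,
      fun h => ⟨0, le_rfl, one_pos, by simpa [extendWord] using h⟩⟩
    obtain rfl : t = 0 := by omega
    simpa [extendWord] using htt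
  rw [wordCrs, card_filter, sum_range_succ, sum_range_one, if_neg hzero,
    if_congr ((isCrossingPos_self c).trans hone) rfl rfl, zero_add]

lemma sum_X_pow_wordCrs_cons_snoc {L : ℕ} (d : Fin L → Bool) :
    ∑ b₀ : Bool, ∑ b₁ : Bool,
        (X : ℤ[X]) ^
          wordCrs (L + 2) (extendWord (Fin.cons b₀ (Fin.snoc d b₁) : Fin (L + 2) → Bool)) =
      (1 + X) ^ 2 * X ^ wordCrs L (extendWord d) := by
  have hlayer : ∑ b₀ : Bool, ∑ b₁ : Bool, (X : ℤ[X]) ^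
      ((if b₀ = false ∧ (b₁ = true ∨ HasTrueIn (extendWord d) 0 L) then 1 else 0) +
        (if b₀ = true ∨ b₁ = true ∨ HasTrueIn (extendWord d) 0 L then 1 else 0) +
        (if b₁ = false ∧ HasTrueIn (extendWord d) 0 L then 1 else 0)) =
      (1 + X) ^ 2 * X ^ (if HasTrueIn (extendWord d) 0 L then 1 else 0) := by
    by_cases hT : HasTrueIn (extendWord d) 0 L <;> simp [hT] <;> ring
  refine mul_right_cancel₀
    (pow_ne_zero (if HasTrueIn (extendWord d) 0 L then 1 else 0) (X_ne_zero (R := ℤ))) ?_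
  simp_rw [sum_mul, ← pow_add, wordCrs_cons_snoc, pow_add (X : ℤ[X]) (wordCrs L (extendWord d)),
    ← mul_sum, hlayer]
  ring

theorem sum_X_pow_wordCrs (L : ℕ) :
    ∑ c : Fin L → Bool, (X : ℤ[X]) ^ wordCrs L (extendWord c) = (1 + X) ^ L := by
  induction L using Nat.twoStepInduction with
  | zero => simp [wordCrs_zero]
  | one =>
    rw [← (Fin.consEquiv fun _ => Bool).sum_comp]
    simp [Fintype.sum_prod_type, wordCrs_one]
    ring
  | more L ih _ =>
    simp_rw [sum_fin_cons_snoc, sum_X_pow_wordCrs_cons_snoc, ← mul_sum, ih]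
    ring

section penultimateZero

variable {L : ℕ}

lemma wordPerm_extendWord_apply_penult (c : Fin L → Bool) :
    (wordPerm (L + 2) (extendWord c) ⟨L, by omega⟩ : ℕ) = 0 := by
  have := (wordPerm_apply_add_add_eq_iff (extendWord c) (⟨L, by omega⟩ : Fin (L + 2))).2
    ⟨extendWord_of_le c le_rfl, by simp⟩
  simpa using this

lemma wordPerm_extendWord_injective :
    Function.Injective fun c : Fin L → Bool => wordPerm (L + 2) (extendWord c) := by
  intro c₁ c₂ h
  funext t
  have ht := wordPerm_apply_add_add_eq_iff (extendWord c₁) (⟨t, by omega⟩ : Fin (L + 2))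
  rw [show wordPerm (L + 2) (extendWord c₁) = wordPerm (L + 2) (extendWord c₂) from h,
    wordPerm_apply_add_add_eq_iff] at ht
  simp only [extendWord, t.isLt, dif_pos, Fin.eta, ne_eq, show (t : ℕ) + 1 ≠ L + 2 by omega,
    not_false_eq_true, and_true] at ht
  revert ht
  cases c₁ t <;> cases c₂ t <;> simp

lemma exists_wordPerm_extendWord_eq {σ : Equiv.Perm (Fin (L + 2))}
    (hσ : AtMostOneLargerRight σ) (hL : (σ ⟨L, by omega⟩ : ℕ) = 0) :
    ∃ c : Fin L → Bool, wordPerm (L + 2) (extendWord c) = σ := by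
  refine ⟨fun t => !decide ((σ (Fin.castLE (by omega) t) : ℕ) + t + 2 = L + 2), ?_⟩
  refine (atMostOneLargerRight_wordPerm _).ext hσ fun i => ?_
  rw [wordPerm_apply_add_add_eq_iff]
  rcases (show (i : ℕ) < L ∨ (i : ℕ) = L ∨ (i : ℕ) = L + 1 by omega) with hi | hi | hi
  · simp [extendWord, hi, Fin.castLE]
    omega
  · rw [show i = ⟨L, by omega⟩ from Fin.ext hi]
    simp [extendWord_of_le, hL]
  · simp [hi]
    omega

end penultimateZero

lemma Fpoly_eq_sum_filter (n : ℕ) (P : Equiv.Perm (Fin n) → Prop) :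
    Fpoly n P = ∑ σ with P σ, X ^ crs σ := by
  rw [Fpoly, sum_filter]

lemma coeff_Fpoly (n : ℕ) (P : Equiv.Perm (Fin n) → Prop) (k : ℕ) :
    (Fpoly n P).coeff k = #{σ | P σ ∧ crs σ = k} := by
  rw [Fpoly, finsetSum_coeff, card_filter, Nat.cast_sum]
  refine sum_congr rfl fun σ _ => ?_
  by_cases hP : P σ <;> simp [hP, coeff_X_pow, eq_comm]

theorem Fpoly_avoids_123_132 (L : ℕ) :
    Fpoly (L + 2) (fun σ => Avoids σ p123 ∧ Avoids σ p132 ∧ (σ ⟨L, by omega⟩ : ℕ) = 0) =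
      (1 + X) ^ L := by
  rw [Fpoly_eq_sum_filter, ← sum_X_pow_wordCrs]
  refine (sum_bij (fun c _ => wordPerm (L + 2) (extendWord c)) (fun c _ => ?_)
    (fun c₁ _ c₂ _ h => wordPerm_extendWord_injective h) (fun σ hσ => ?_)
    (fun c _ => by rw [crs_wordPerm])).symm
  · simp only [mem_filter, mem_univ, true_and, ← and_assoc, avoids_p123_and_p132_iff]
    exact ⟨atMostOneLargerRight_wordPerm _, wordPerm_extendWord_apply_penult c⟩
  · simp only [mem_filter, mem_univ, true_and, ← and_assoc, avoids_p123_and_p132_iff] at hσ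
    obtain ⟨c, hc⟩ := exists_wordPerm_extendWord_eq hσ.1 hσ.2
    exact ⟨c, mem_univ _, hc⟩

theorem count_crossings_123_132_pos (n k : ℕ) (hn : 2 ≤ n) :
    (Finset.univ.filter (fun σ : Equiv.Perm (Fin n) =>
        Avoids σ p123 ∧ Avoids σ p132 ∧ (σ ⟨n - 2, by omega⟩ : ℕ) = 0 ∧ crs σ = k)).card =
      Nat.choose (n - 2) k := by
  obtain ⟨L, rfl⟩ : ∃ L, n = L + 2 := ⟨n - 2, by omega⟩
  have h := congrArg (coeff · k) (Fpoly_avoids_123_132 L)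
  simp only [coeff_Fpoly, coeff_one_add_X_pow, and_assoc] at h
  simp only [Nat.add_sub_cancel]
  exact_mod_cast h
end
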